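/- Fix an integer n ≥ 1 and real numbers λ, ξ with ξ ≥ n·|λ| and ξ + λ² > 0. Then the vector v₀ = (ξ+λ²)^{−1/2}·(√((ξ−nλ)/2), √((ξ+nλ)/2), iλ)ᵀ ∈ ℂ³ has Euclidean norm 1 and satisfies m₁(λ,ξ)·v₀ = 0. -/

import Mathlib

open Complex Matrix

/-- The matrix `m₁ = m₁(λ,ξ)` of Lemma 5.2, with rows
`(−λ, 0, −i√((ξ−nλ)/2))`, `(0, λ, i√((ξ+nλ)/2))`, `(i√((ξ−nλ)/2), −i√((ξ+nλ)/2), n)`. -/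
noncomputable def m1 (n : ℕ) (lam ξ : ℝ) : Matrix (Fin 3) (Fin 3) ℂ :=
  !![(-lam : ℂ), 0, -Complex.I * (Real.sqrt ((ξ - n * lam) / 2) : ℂ);
     0, (lam : ℂ), Complex.I * (Real.sqrt ((ξ + n * lam) / 2) : ℂ);
     Complex.I * (Real.sqrt ((ξ - n * lam) / 2) : ℂ),
       -Complex.I * (Real.sqrt ((ξ + n * lam) / 2) : ℂ), (n : ℂ)]

/-- The unit eigenvector `v₀ = (ξ+λ²)^{−1/2}·(√((ξ−nλ)/2), √((ξ+nλ)/2), iλ)ᵀ`. -/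
noncomputable def v0 (n : ℕ) (lam ξ : ℝ) : Fin 3 → ℂ :=
  ((Real.sqrt (ξ + lam ^ 2) : ℂ))⁻¹ •
    ![(Real.sqrt ((ξ - n * lam) / 2) : ℂ),
      (Real.sqrt ((ξ + n * lam) / 2) : ℂ),
      Complex.I * (lam : ℂ)]

/-! The first two rows of `m₁` annihilate `(a, b, iλ)` because `i² = −1`; the third one does
exactly when `b² − a² = nλ`, which is what the choice `a² = (ξ−nλ)/2`, `b² = (ξ+nλ)/2` gives.
The norm of `(a, b, iλ)` is then `√(a² + b² + λ²) = √(ξ + λ²)`. -/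

theorem mulVec_eq_zero_of_sq_sub_sq {a b lam N : ℂ} (hab : b ^ 2 - a ^ 2 = N * lam) :
    !![-lam, 0, -I * a; 0, lam, I * b; I * a, -I * b, N] *ᵥ ![a, b, I * lam] = 0 := by
  ext i
  fin_cases i <;>
    simp only [mulVec, dotProduct, Fin.sum_univ_three, Fin.zero_eta, Fin.mk_one, Fin.reduceFinMk,
      of_apply, cons_val', cons_val_fin_one, cons_val_zero, cons_val_one, cons_val, Pi.zero_apply,
      neg_mul, zero_mul, add_zero, zero_add]
  · linear_combination (-lam * a) * I_sq
  · linear_combination (lam * b) * I_sq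
  · linear_combination -I * hab

theorem norm_toLp_ofReal_ofReal_I_mul (a b lam : ℝ) :
    ‖WithLp.toLp 2 ![(a : ℂ), b, I * lam]‖ = √(a ^ 2 + b ^ 2 + lam ^ 2) := by
  simp [EuclideanSpace.norm_eq, Fin.sum_univ_three, norm_real]

theorem sub_nonneg_and_add_nonneg_of_mul_abs_le {n : ℕ} {lam ξ : ℝ} (h : (n : ℝ) * |lam| ≤ ξ) :
    0 ≤ ξ - n * lam ∧ 0 ≤ ξ + n * lam := by
  have := abs_le.mp (show |(n : ℝ) * lam| ≤ ξ by rwa [abs_mul, Nat.abs_cast])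
  constructor <;> linarith

theorem stmt_6 (n : ℕ) (lam ξ : ℝ) (h : (n : ℝ) * |lam| ≤ ξ)
    (hpos : 0 < ξ + lam ^ 2) :
    ‖(WithLp.equiv 2 (Fin 3 → ℂ)).symm (v0 n lam ξ)‖ = 1 ∧
    (m1 n lam ξ).mulVec (v0 n lam ξ) = 0 := by
  obtain ⟨hsub, hadd⟩ := sub_nonneg_and_add_nonneg_of_mul_abs_le h
  have ha := Real.sq_sqrt (div_nonneg hsub zero_le_two)
  have hb := Real.sq_sqrt (div_nonneg hadd zero_le_two)
  constructor
  · have hr : 0 < √(ξ + lam ^ 2) := Real.sqrt_pos.mpr hpos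
    change ‖WithLp.toLp 2 (v0 n lam ξ)‖ = 1
    rw [v0, WithLp.toLp_smul, norm_smul, norm_toLp_ofReal_ofReal_I_mul, ha, hb, norm_inv,
      norm_real, Real.norm_of_nonneg hr.le,
      show (ξ - n * lam) / 2 + (ξ + n * lam) / 2 + lam ^ 2 = ξ + lam ^ 2 by ring,
      inv_mul_cancel₀ hr.ne']
  · have hab : (√((ξ + n * lam) / 2) : ℂ) ^ 2 - (√((ξ - n * lam) / 2) : ℂ) ^ 2 = n * lam := by
      rw [← ofReal_pow, ← ofReal_pow, ha, hb]
      push_cast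
      ring
    rw [v0, mulVec_smul, m1, mulVec_eq_zero_of_sq_sub_sq hab, smul_zero]
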